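/- arXiv:funct-an/9306002 — 4 statements merged into one kernel-verified Lean document; each statement's English description precedes it below -/
import Mathlib

section
/- For a commutative ring R, elements t_1,...,t_n and p_r,...,p_n of R, define E_{r,n}(t_1,...,t_n; p_r,...,p_n) = Σ_{s=0}^{r} (-1)^{r+s} e_s(t_1,...,t_n) · h_{r-s}(p_r,...,p_n), with the convention E_{0,n} = 1 and E_{r,n} = 0 if n < r. Then for 1 ≤ r ≤ n, E_{r,n}(t_1,...,t_n; p_r,...,p_n) = (t_n − p_n) · E_{r-1,n-1}(t_1,...,t_{n-1}; p_r,...,p_n) + E_{r,n-1}(t_1,...,t_{n-1}; p_r,...,p_{n-1}). -/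
/-- The elementary symmetric polynomial of degree `s` in the variables `t j`, `j ∈ S`. -/
def esym {R : Type*} [CommRing R] (s : ℕ) (S : Finset ℕ) (t : ℕ → R) : R :=
  ∑ J ∈ S.powersetCard s, ∏ j ∈ J, t j

/-- The complete homogeneous symmetric polynomial of degree `k` in the variables `t j`, `j ∈ S`. -/
def hsym {R : Type*} [CommRing R] (k : ℕ) (S : Finset ℕ) (t : ℕ → R) : R :=
  ∑ m ∈ S.sym k, ((m : Multiset ℕ).map t).prod

/-- `E_{r,n}(t_1,…,t_n; p_r,…,p_n) = Σ_{s=0}^r (-1)^{r+s} e_s(t_1,…,t_n) h_{r-s}(p_r,…,p_n)`,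
with the conventions `E_{0,n} = 1` and `E_{r,n} = 0` if `n < r`. -/
def Efun {R : Type*} [CommRing R] (r n : ℕ) (t p : ℕ → R) : R :=
  if n < r then 0
  else ∑ s ∈ Finset.range (r + 1),
    (-1 : R) ^ (r + s) * esym s (Finset.Icc 1 n) t * hsym (r - s) (Finset.Icc r n) p

/-!
For `r ≤ n + 1`, `E_{r,n}` is the alternating convolution `Σ_{i+j=r} (-1)^j e_i h_j` of the
sequences `e_i = e_i(t_1,…,t_n)` and `h_j = h_j(p_r,…,p_n)`. Adjoining the variable `t_n` changes
`e` by `e_{i+1} ↦ e_{i+1} + t_n e_i`, adjoining `p_n` changes `h` by `h_{j+1} ↦ p_n h_j + h_{j+1}`,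
and each of these Pascal-type rules passes through the convolution, contributing `t_n E_{r-1}`
and `-p_n E_{r-1}` respectively.
-/

open Finset

theorem Multiset.esymm_cons {R : Type*} [CommSemiring R] (a : R) (m : Multiset R) (n : ℕ) :
    (a ::ₘ m).esymm (n + 1) = m.esymm (n + 1) + a * m.esymm n := by
  simp [Multiset.esymm, Multiset.sum_map_mul_left]

section

variable {R : Type*} [CommRing R]

theorem esym_zero (S : Finset ℕ) (t : ℕ → R) : esym 0 S t = 1 := by
  simp [esym]

theorem esym_of_card_lt {s : ℕ} {S : Finset ℕ} (h : #S < s) (t : ℕ → R) : esym s S t = 0 := by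
  simp [esym, powersetCard_eq_empty.2 h]

theorem esym_succ_insert {x : ℕ} {S : Finset ℕ} (h : x ∉ S) (s : ℕ) (t : ℕ → R) :
    esym (s + 1) (insert x S) t = esym (s + 1) S t + t x * esym s S t := by
  simp only [esym, ← Finset.esymm_map_val, insert_val_of_notMem h, Multiset.map_cons,
    Multiset.esymm_cons]

theorem hsym_zero (S : Finset ℕ) (t : ℕ → R) : hsym 0 S t = 1 := by
  rw [hsym, sym_zero, sum_singleton]
  rfl

theorem hsym_empty (k : ℕ) (t : ℕ → R) : hsym (k + 1) ∅ t = 0 := by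
  simp [hsym]

theorem hsym_map (k : ℕ) (g : ℕ ↪ ℕ) (S : Finset ℕ) (t : ℕ → R) :
    hsym k (S.map g) t = hsym k S (t ∘ g) := by
  simp [hsym, sym_map, Multiset.map_map]

theorem hsym_succ_insert {x : ℕ} {S : Finset ℕ} (h : x ∉ S) (k : ℕ) (t : ℕ → R) :
    hsym (k + 1) (insert x S) t = t x * hsym k (insert x S) t + hsym (k + 1) S t := by
  rw [hsym, ← sum_filter_add_sum_filter_not _ (x ∈ ·)]
  congr 1
  · rw [hsym, mul_sum]
    symm
    refine sum_bij (fun m _ => x ::ₛ m) (fun m hm => ?_)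
      (fun _ _ _ _ => (Sym.cons_inj_right x _ _).1) (fun m hm => ?_)
      (fun m _ => by rw [Sym.coe_cons, Multiset.map_cons, Multiset.prod_cons])
    · refine mem_filter.2 ⟨mem_sym_iff.2 fun a ha => ?_, Sym.mem_cons_self x m⟩
      rcases Sym.mem_cons.1 ha with rfl | ha
      exacts [mem_insert_self a S, mem_sym_iff.1 hm a ha]
    · obtain ⟨hm, hxm⟩ := mem_filter.1 hm
      obtain ⟨m', rfl⟩ := Sym.exists_cons_of_mem hxm
      exact ⟨m', mem_sym_iff.2 fun a ha => mem_sym_iff.1 hm a (Sym.mem_cons_of_mem ha), rfl⟩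
  · rw [hsym]
    congr 1
    ext m
    simp only [mem_filter, mem_sym_iff, mem_insert]
    exact ⟨fun ⟨hm, hxm⟩ a ha => (hm a ha).resolve_left (by rintro rfl; exact hxm ha),
      fun hm => ⟨fun a ha => .inr (hm a ha), fun hxm => h (hm x hxm)⟩⟩

/-- `Σ_{i+j=r} (-1)^j e_i h_j`, the coefficient of `x^r` in `(Σ e_i x^i)(Σ h_j (-x)^j)`. -/
def altConv (e h : ℕ → R) (r : ℕ) : R :=
  ∑ ij ∈ antidiagonal r, (-1) ^ ij.2 * e ij.1 * h ij.2

theorem altConv_succ_of_left {E e : ℕ → R} (c : R) (hE : ∀ i, E (i + 1) = e (i + 1) + c * e i)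
    (hE₀ : E 0 = e 0) (h : ℕ → R) (r : ℕ) :
    altConv E h (r + 1) = altConv e h (r + 1) + c * altConv e h r := by
  simp only [altConv, Nat.sum_antidiagonal_succ, hE, hE₀, mul_sum]
  rw [add_assoc, ← sum_add_distrib]
  congr 2 with ij
  ring

theorem altConv_succ_of_right {H h : ℕ → R} (c : R) (hH : ∀ j, H (j + 1) = c * H j + h (j + 1))
    (hH₀ : H 0 = h 0) (e : ℕ → R) (r : ℕ) :
    altConv e H (r + 1) = altConv e h (r + 1) - c * altConv e H r := by
  simp only [altConv, Nat.sum_antidiagonal_succ', hH, hH₀, mul_sum]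
  rw [add_sub_assoc, ← sum_sub_distrib]
  congr 2 with ij
  ring

theorem Efun_eq_altConv {r n : ℕ} (hrn : r ≤ n + 1) (t p : ℕ → R) :
    Efun r n t p = altConv (esym · (Icc 1 n) t) (hsym · (Icc r n) p) r := by
  rw [Efun, altConv]
  split_ifs with hnr
  · obtain rfl : r = n + 1 := by omega
    refine (sum_eq_zero fun ij hij => ?_).symm
    obtain ⟨i, j⟩ := ij
    rcases j with _ | j
    · obtain rfl : i = n + 1 := by simpa using hij
      rw [esym_of_card_lt (by simp)]
      ring
    · rw [show Icc (n + 1) n = ∅ from Icc_eq_empty (by omega), hsym_empty]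
      ring
  · rw [Nat.sum_antidiagonal_eq_sum_range_succ (fun i j => (-1) ^ j * esym i _ t * hsym j _ p)]
    refine sum_congr rfl fun s hs => ?_
    rw [show r + s = r - s + 2 * s by grind, pow_add, pow_mul, neg_one_sq, one_pow, mul_one]

theorem esym_Icc_succ_right {a b : ℕ} (hab : a ≤ b + 1) (s : ℕ) (t : ℕ → R) :
    esym (s + 1) (Icc a (b + 1)) t =
      esym (s + 1) (Icc a b) t + t (b + 1) * esym s (Icc a b) t := by
  rw [← insert_Icc_right_eq_Icc_add_one hab, esym_succ_insert (by simp)]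

theorem hsym_Icc_succ_right {a b : ℕ} (hab : a ≤ b + 1) (k : ℕ) (t : ℕ → R) :
    hsym (k + 1) (Icc a (b + 1)) t =
      t (b + 1) * hsym k (Icc a (b + 1)) t + hsym (k + 1) (Icc a b) t := by
  rw [← insert_Icc_right_eq_Icc_add_one hab, hsym_succ_insert (by simp)]

theorem hsym_Icc_comp_succ (k a b : ℕ) (t : ℕ → R) :
    hsym k (Icc a b) (fun j => t (j + 1)) = hsym k (Icc (a + 1) (b + 1)) t := by
  rw [← map_add_right_Icc, hsym_map]
  rfl

end

/-- The parameter list `p_r,…,p_n` of `E_{r-1,n-1}` is realised by the shift `j ↦ p (j+1)`. -/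
theorem Efun_recursion {R : Type*} [CommRing R] (r n : ℕ) (t p : ℕ → R)
    (h1 : 1 ≤ r) (h2 : r ≤ n) :
    Efun r n t p =
      (t n - p n) * Efun (r - 1) (n - 1) t (fun j => p (j + 1)) + Efun r (n - 1) t p := by
  obtain ⟨q, rfl⟩ : ∃ q, r = q + 1 := ⟨r - 1, by omega⟩
  obtain ⟨m, rfl⟩ : ∃ m, n = m + 1 := ⟨n - 1, by omega⟩
  simp only [Nat.add_sub_cancel]
  rw [Efun_eq_altConv (by omega), Efun_eq_altConv (by omega), Efun_eq_altConv (by omega)]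
  simp only [hsym_Icc_comp_succ]
  rw [altConv_succ_of_left (e := (esym · (Icc 1 m) t)) (t (m + 1))
      (esym_Icc_succ_right (by omega) · t) (by simp only [esym_zero]),
    altConv_succ_of_right (h := (hsym · (Icc (q + 1) m) p)) (p (m + 1))
      (hsym_Icc_succ_right (by omega) · p) (by simp only [hsym_zero])]
  ring
end

section
/- Let E_{r,n}(t; p) = Σ_{s=0}^{r} (-1)^{r+s} e_s(t_1,...,t_n) h_{r-s}(p_r,...,p_n) as above. If p_r = p_{r+1} = ... = p_n = p̄ (a common value), then E_{r,n}(t_1,...,t_n; p̄,...,p̄) = e_r(t_1 − p̄, t_2 − p̄, ..., t_n − p̄), the r-th elementary symmetric polynomial of the shifted variables. -/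
lemma card_finset_sym {α : Type*} [DecidableEq α] (s : Finset α) (k : ℕ) :
    (s.sym k).card = (s.card + k - 1).choose k := by
  classical
  have h : s.sym k = (Finset.univ : Finset (Sym {x // x ∈ s} k)).image (Sym.map Subtype.val) := by
    ext m
    simp only [Finset.mem_image, Finset.mem_univ, true_and, Finset.mem_sym_iff]
    constructor
    · intro hm
      refine ⟨(m.attach).map (fun x => ⟨x.1, hm x.1 x.2⟩), ?_⟩
      rw [Sym.map_map]
      exact m.attach_map_coe
    · rintro ⟨m', rfl⟩ a ha
      obtain ⟨⟨b, hb⟩, _, rfl⟩ := Sym.mem_map.1 ha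
      exact hb
  rw [h, Finset.card_image_of_injective _ (Sym.map_injective Subtype.val_injective _),
    Finset.card_univ, Sym.card_sym_eq_choose, Fintype.card_coe]

lemma card_supersets {α : Type*} [DecidableEq α] (S K : Finset α) (hK : K ⊆ S) {r : ℕ}
    (hr : K.card ≤ r) :
    ((S.powersetCard r).filter (fun J => K ⊆ J)).card
      = (S.card - K.card).choose (r - K.card) := by
  classical
  rw [← Finset.card_sdiff_of_subset hK, ← Finset.card_powersetCard]
  apply Finset.card_bij' (fun J _ => J \ K) (fun L _ => L ∪ K)
  · intro J hJ
    simp only [Finset.mem_filter, Finset.mem_powersetCard] at hJ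
    obtain ⟨⟨hJS, hJc⟩, hKJ⟩ := hJ
    rw [Finset.mem_powersetCard]
    exact ⟨Finset.sdiff_subset_sdiff hJS le_rfl, by rw [Finset.card_sdiff_of_subset hKJ, hJc]⟩
  · intro L hL
    rw [Finset.mem_powersetCard] at hL
    obtain ⟨hLS, hLc⟩ := hL
    have hd : Disjoint L K := Finset.disjoint_of_subset_left hLS Finset.sdiff_disjoint
    simp only [Finset.mem_filter, Finset.mem_powersetCard]
    refine ⟨⟨Finset.union_subset (hLS.trans Finset.sdiff_subset) hK, ?_⟩, Finset.subset_union_right⟩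
    rw [Finset.card_union_of_disjoint hd, hLc]
    omega
  · intro J hJ
    simp only [Finset.mem_filter, Finset.mem_powersetCard] at hJ
    exact Finset.sdiff_union_of_subset hJ.2
  · intro L hL
    rw [Finset.mem_powersetCard] at hL
    have hd : Disjoint L K := Finset.disjoint_of_subset_left hL.1 Finset.sdiff_disjoint
    rw [Finset.union_sdiff_right, Finset.sdiff_eq_self_of_disjoint hd]

lemma hsym_const {R : Type*} [CommRing R] (k : ℕ) (S : Finset ℕ) (c : R) :
    hsym k S (fun _ => c) = ((S.card + k - 1).choose k : R) * c ^ k := by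
  unfold hsym
  have h : ∀ m ∈ S.sym k, (((m : Sym ℕ k) : Multiset ℕ).map (fun _ => c)).prod = c ^ k := by
    intro m _
    rw [Multiset.map_const', Multiset.prod_replicate, Sym.card_coe]
  rw [Finset.sum_congr rfl h, Finset.sum_const, card_finset_sym, nsmul_eq_mul]

lemma neg_one_pow_add_eq {R : Type*} [CommRing R] {r s : ℕ} (h : s ≤ r) :
    (-1 : R) ^ (r + s) = (-1) ^ (r - s) := by
  have h2 : (r - s) + 2 * s = r + s := by omega
  rw [← h2, pow_add, pow_mul]
  simp

/-- If `p_r = … = p_n = p̄` then `E_{r,n}(t; p̄,…,p̄) = e_r(t_1 − p̄, …, t_n − p̄)`. -/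
theorem Efun_const_param {R : Type*} [CommRing R] (r n : ℕ) (t : ℕ → R) (pbar : R)
    (h2 : r ≤ n) :
    Efun r n t (fun _ => pbar) =
      ∑ J ∈ (Finset.Icc 1 n).powersetCard r, ∏ j ∈ J, (t j - pbar) := by
  classical
  set S := Finset.Icc 1 n with hS
  have hcard : S.card = n := by simp [hS]
  -- RHS: expand each product
  have step1 : ∀ J ∈ S.powersetCard r, ∏ j ∈ J, (t j - pbar)
      = ∑ K ∈ J.powerset, (∏ j ∈ K, t j) * (-pbar) ^ (r - K.card) := by
    intro J hJ
    rw [Finset.mem_powersetCard] at hJ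
    have : ∀ j ∈ J, t j - pbar = t j + (-pbar) := fun j _ => sub_eq_add_neg _ _
    rw [Finset.prod_congr rfl this, Finset.prod_add]
    refine Finset.sum_congr rfl fun K hK => ?_
    rw [Finset.mem_powerset] at hK
    rw [Finset.prod_const, Finset.card_sdiff_of_subset hK, hJ.2]
  rw [Finset.sum_congr rfl step1]
  -- swap the two sums
  rw [Finset.sum_comm' (t' := S.powerset)
      (s' := fun K => (S.powersetCard r).filter (fun J => K ⊆ J))
      (fun J K => by
        simp only [Finset.mem_filter, Finset.mem_powerset, Finset.mem_powersetCard]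
        constructor
        · rintro ⟨⟨hJS, hJc⟩, hKJ⟩
          exact ⟨⟨⟨hJS, hJc⟩, hKJ⟩, hKJ.trans hJS⟩
        · rintro ⟨⟨h1, h3⟩, _⟩
          exact ⟨h1, h3⟩)]
  -- inner sum is constant
  have step2 : ∀ K ∈ S.powerset,
      ∑ _J ∈ (S.powersetCard r).filter (fun J => K ⊆ J),
        (∏ j ∈ K, t j) * (-pbar) ^ (r - K.card)
      = (((S.powersetCard r).filter (fun J => K ⊆ J)).card : R)
          * ((∏ j ∈ K, t j) * (-pbar) ^ (r - K.card)) := by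
    intro K _
    rw [Finset.sum_const, nsmul_eq_mul]
  rw [Finset.sum_congr rfl step2, Finset.sum_powerset]
  rw [hcard]
  -- drop the terms with s > r
  rw [show n + 1 = (r + 1) + (n - r) by omega, Finset.sum_range_add]
  have hzero : ∑ i ∈ Finset.range (n - r), ∑ K ∈ S.powersetCard (r + 1 + i),
      (((S.powersetCard r).filter (fun J => K ⊆ J)).card : R)
        * ((∏ j ∈ K, t j) * (-pbar) ^ (r - K.card)) = 0 := by
    refine Finset.sum_eq_zero fun i _ => Finset.sum_eq_zero fun K hK => ?_
    rw [Finset.mem_powersetCard] at hK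
    have : (S.powersetCard r).filter (fun J => K ⊆ J) = ∅ := by
      refine Finset.filter_eq_empty_iff.2 fun J hJ hKJ => ?_
      rw [Finset.mem_powersetCard] at hJ
      have := Finset.card_le_card hKJ
      omega
    rw [this]
    simp
  rw [hzero, add_zero]
  -- now compare with LHS termwise
  unfold Efun
  rw [if_neg (by omega)]
  refine Finset.sum_congr rfl fun s hs => ?_
  rw [Finset.mem_range] at hs
  have hsr : s ≤ r := by omega
  have hIcc : (Finset.Icc r n).card = n - r + 1 := by
    rw [Nat.card_Icc]; omega
  rw [hsym_const, hIcc]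
  have hch : n - r + 1 + (r - s) - 1 = n - s := by omega
  rw [hch, ← hS]
  unfold esym
  rw [Finset.mul_sum, Finset.sum_mul]
  refine Finset.sum_congr rfl fun K hK => ?_
  rw [Finset.mem_powersetCard] at hK
  rw [card_supersets S K hK.1 (by omega), hK.2, hcard, neg_one_pow_add_eq hsr, neg_pow pbar (r - s)]
  ring
end

section
/- Let β > 0, g ≥ 0, ḡ ≥ 0, and set ρ_j = (n − j)g + ḡ for j = 1,...,n. Define F_β(θ) = Σ_{j=1}^n cosh(β θ_j) for θ ∈ ℝⁿ, and for λ, λ' ∈ ℤⁿ with λ_1 ≥ ... ≥ λ_n ≥ 0 and λ'_1 ≥ ... ≥ λ'_n ≥ 0, say λ' < λ iff λ' ≠ λ and Σ_{j=1}^k λ'_j ≤ Σ_{j=1}^k λ_j for all k = 1,...,n. Then λ > λ' implies F_β(λ + ρ) > F_β(λ' + ρ). -/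
/-- Strict tangent-line inequality for `cosh` (strict convexity). -/
lemma cosh_tangent_lt (u v : ℝ) (h : u ≠ v) :
    Real.sinh u * (v - u) < Real.cosh v - Real.cosh u := by
  rcases lt_or_gt_of_ne h with h1 | h1
  · obtain ⟨c, hc, hderiv⟩ := exists_hasDerivAt_eq_slope Real.cosh Real.sinh h1
      Real.continuous_cosh.continuousOn (fun x _ => Real.hasDerivAt_cosh x)
    have hvu : (0:ℝ) < v - u := by linarith
    have heq : Real.cosh v - Real.cosh u = Real.sinh c * (v - u) := by
      field_simp at hderiv; linarith
    rw [heq]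
    exact mul_lt_mul_of_pos_right (Real.sinh_lt_sinh.2 hc.1) hvu
  · obtain ⟨c, hc, hderiv⟩ := exists_hasDerivAt_eq_slope Real.cosh Real.sinh h1
      Real.continuous_cosh.continuousOn (fun x _ => Real.hasDerivAt_cosh x)
    have hvu : v - u < 0 := by linarith
    have heq : Real.cosh v - Real.cosh u = Real.sinh c * (v - u) := by
      have hne : u - v ≠ 0 := by intro h0; apply h; linarith
      field_simp at hderiv
      nlinarith [hderiv]
    rw [heq]
    have : Real.sinh c < Real.sinh u := Real.sinh_lt_sinh.2 hc.2
    nlinarith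

lemma cosh_tangent_le (u v : ℝ) :
    Real.sinh u * (v - u) ≤ Real.cosh v - Real.cosh u := by
  rcases eq_or_ne u v with rfl | h
  · simp
  · exact (cosh_tangent_lt u v h).le

/-- Monotonicity of the spectrum of `D̂₁`: if `λ > λ'` in the dominance order on dominant
weights of `ℤⁿ` (indexed here by `j = 0,…,n-1`, with `ρ_j = (n-1-j)g + ḡ`), then
`F_β(λ+ρ) > F_β(λ'+ρ)` where `F_β(θ) = Σ_j cosh(β θ_j)`. -/
theorem spectrum_monotone (n : ℕ) (β g gbar : ℝ) (hβ : 0 < β) (hg : 0 ≤ g) (hgbar : 0 ≤ gbar)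
    (lam mu : ℕ → ℤ)
    (hlam1 : ∀ j k, j ≤ k → k < n → lam k ≤ lam j) (hlam2 : ∀ j, j < n → 0 ≤ lam j)
    (hmu1 : ∀ j k, j ≤ k → k < n → mu k ≤ mu j) (hmu2 : ∀ j, j < n → 0 ≤ mu j)
    (hdom : ∀ k, k ≤ n → ∑ j ∈ Finset.range k, mu j ≤ ∑ j ∈ Finset.range k, lam j)
    (hne : ∃ j, j < n ∧ mu j ≠ lam j) :
    ∑ j ∈ Finset.range n, Real.cosh (β * ((mu j : ℝ) + (((n : ℝ) - 1 - j) * g + gbar))) <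
      ∑ j ∈ Finset.range n, Real.cosh (β * ((lam j : ℝ) + (((n : ℝ) - 1 - j) * g + gbar))) := by
  obtain ⟨j0, hj0n, hj0ne⟩ := hne
  set x : ℕ → ℝ := fun j => (lam j : ℝ) + (((n : ℝ) - 1 - j) * g + gbar) with hx
  set y : ℕ → ℝ := fun j => (mu j : ℝ) + (((n : ℝ) - 1 - j) * g + gbar) with hy
  -- partial sums of the differences are nonnegative
  have hS : ∀ k, k ≤ n → 0 ≤ ∑ j ∈ Finset.range k, (x j - y j) := by
    intro k hk
    have : ∑ j ∈ Finset.range k, (x j - y j)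
        = ((∑ j ∈ Finset.range k, lam j : ℤ) : ℝ) - ((∑ j ∈ Finset.range k, mu j : ℤ) : ℝ) := by
      push_cast
      rw [← Finset.sum_sub_distrib]
      apply Finset.sum_congr rfl
      intro j _
      simp only [hx, hy]; ring
    rw [this, sub_nonneg]
    exact_mod_cast hdom k hk
  -- the weights c j = sinh (β * y j)
  set c : ℕ → ℝ := fun j => Real.sinh (β * y j) with hc
  -- c is nonincreasing on range n
  have hcmono : ∀ i, i + 1 < n → c (i + 1) ≤ c i := by
    intro i hi
    apply Real.sinh_le_sinh.2
    apply mul_le_mul_of_nonneg_left _ hβ.le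
    have h1 : mu (i + 1) ≤ mu i := hmu1 i (i + 1) (Nat.le_succ i) hi
    have h2 : ((n : ℝ) - 1 - (i + 1 : ℕ)) * g ≤ ((n : ℝ) - 1 - i) * g := by
      apply mul_le_mul_of_nonneg_right _ hg
      push_cast; linarith
    have h1' : ((mu (i + 1) : ℝ)) ≤ (mu i : ℝ) := by exact_mod_cast h1
    simp only [hy]; linarith
  -- c (n-1) ≥ 0
  have hclast : 0 ≤ c (n - 1) := by
    have hn : 0 < n := lt_of_le_of_lt (Nat.zero_le _) hj0n
    rw [hc, Real.sinh_nonneg_iff]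
    apply mul_nonneg hβ.le
    have h1 : (0 : ℝ) ≤ (mu (n - 1) : ℝ) := by
      exact_mod_cast hmu2 (n - 1) (Nat.sub_lt hn one_pos)
    have h2 : (0 : ℝ) ≤ ((n : ℝ) - 1 - (n - 1 : ℕ)) * g := by
      apply mul_nonneg _ hg
      have : ((n - 1 : ℕ) : ℝ) = (n : ℝ) - 1 := by
        push_cast [Nat.cast_sub hn]; ring
      rw [this]; linarith
    simp only [hy]; linarith
  -- Abel summation: Σ c j * (x j - y j) ≥ 0
  have habel : 0 ≤ ∑ j ∈ Finset.range n, c j * (x j - y j) := by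
    have := Finset.sum_range_by_parts c (fun j => x j - y j) n
    simp only [smul_eq_mul] at this
    rw [this]
    have t1 : 0 ≤ c (n - 1) * ∑ i ∈ Finset.range n, (x i - y i) :=
      mul_nonneg hclast (hS n le_rfl)
    have t2 : ∑ i ∈ Finset.range (n - 1),
        (c (i + 1) - c i) * ∑ j ∈ Finset.range (i + 1), (x j - y j) ≤ 0 := by
      apply Finset.sum_nonpos
      intro i hi
      have hi' : i + 1 < n := by
        have := Finset.mem_range.1 hi; omega
      apply mul_nonpos_of_nonpos_of_nonneg
      · linarith [hcmono i hi']
      · exact hS (i + 1) hi'.le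
    linarith
  -- pointwise tangent inequalities
  have hpt : ∀ j ∈ Finset.range n,
      Real.cosh (β * y j) + c j * (β * x j - β * y j) ≤ Real.cosh (β * x j) := by
    intro j _
    have := cosh_tangent_le (β * y j) (β * x j)
    simp only [hc]; linarith
  have hpt0 : Real.cosh (β * y j0) + c j0 * (β * x j0 - β * y j0) < Real.cosh (β * x j0) := by
    have hne' : β * y j0 ≠ β * x j0 := by
      simp only [hx, hy]
      intro h
      apply hj0ne
      have := mul_left_cancel₀ hβ.ne' h
      have : (mu j0 : ℝ) = (lam j0 : ℝ) := by linarith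
      exact_mod_cast this
    have := cosh_tangent_lt (β * y j0) (β * x j0) hne'
    simp only [hc]; linarith
  -- combine
  have hsum : ∑ j ∈ Finset.range n, (Real.cosh (β * y j) + c j * (β * x j - β * y j))
      < ∑ j ∈ Finset.range n, Real.cosh (β * x j) :=
    Finset.sum_lt_sum hpt ⟨j0, Finset.mem_range.2 hj0n, hpt0⟩
  have hexp : ∑ j ∈ Finset.range n, (Real.cosh (β * y j) + c j * (β * x j - β * y j))
      = ∑ j ∈ Finset.range n, Real.cosh (β * y j)
        + β * ∑ j ∈ Finset.range n, c j * (x j - y j) := by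
    rw [Finset.sum_add_distrib, Finset.mul_sum]
    congr 1
    apply Finset.sum_congr rfl
    intro j _; ring
  have : ∑ j ∈ Finset.range n, Real.cosh (β * y j)
      < ∑ j ∈ Finset.range n, Real.cosh (β * x j) := by
    rw [hexp] at hsum
    nlinarith [mul_nonneg hβ.le habel]
  exact this
end

section
/- Let k_1, k_2 ∈ ℝ. Then for every z in the closed unit disc of ℂ with z ≠ 1, the limit lim_{q↑1} (q^{k_1} z; q)_∞ / (q^{k_2} z; q)_∞ = (1 − z)^{k_2 − k_1} holds, where (a;q)_∞ = Π_{m=1}^∞ (1 − a q^m) and the power (1−z)^{k_2−k_1} is taken with the principal branch. -/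
/-!
Since `‖z‖ ≤ 1` and `z ≠ 1` force `Re z < 1`, for `q` close to `1` all factors `1 - qˣ z` with
`x ≥ c` lie in a half-plane `Re ≥ δ > 0`, so `(q^k z; q)_∞ = exp (∑ₘ f (k + 1 + m))` with
`f x = log (1 - qˣ z)`. Up to an error bounded by `f''`, `f (x + d) - f x` equals
`d • (f (x + 1) - f x)`, and these differences telescope: `∑ₘ (f (c + d + m) - f (c + m))` is
`-d • f c` up to `O(∑ₘ sup |f''| on [c + m, ∞)) = O(log² q / (1 - q))`, which tends to `0`, while
`f c → log (1 - z)`. Hence the log of the ratio tends to `(k₂ - k₁) log (1 - z)`.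
-/

open Complex Filter Set Topology

section Taylor

variable {E : Type*} [NormedAddCommGroup E] [NormedSpace ℝ E]

theorem norm_image_sub_sub_smul_deriv_le {f f' f'' : ℝ → E} {a b C : ℝ} (hab : a ≤ b)
    (hf : ∀ x ∈ Icc a b, HasDerivAt f (f' x) x) (hf' : ∀ x ∈ Icc a b, HasDerivAt f' (f'' x) x)
    (hC : ∀ x ∈ Icc a b, ‖f'' x‖ ≤ C) :
    ‖f b - f a - (b - a) • f' a‖ ≤ C * (b - a) ^ 2 := by
  have ha : a ∈ Icc a b := left_mem_Icc.2 hab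
  have hb : b ∈ Icc a b := right_mem_Icc.2 hab
  have hf'_lip : ∀ x ∈ Icc a b, ‖f' x - f' a‖ ≤ C * (b - a) := fun x hx => by
    have := (convex_Icc a b).norm_image_sub_le_of_norm_hasDerivWithin_le
      (fun y hy => (hf' y hy).hasDerivWithinAt) hC ha hx
    have hC0 : 0 ≤ C := (norm_nonneg _).trans (hC a ha)
    rw [Real.norm_of_nonneg (sub_nonneg.2 hx.1)] at this
    exact this.trans (mul_le_mul_of_nonneg_left (by linarith [hx.2]) hC0)
  have hderiv : ∀ x ∈ Icc a b, HasDerivAt (fun y => f y - (y - a) • f' a) (f' x - f' a) x :=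
    fun x hx => by
      simpa using (hf x hx).fun_sub (((hasDerivAt_id x).sub_const a).smul_const (f' a))
  have := (convex_Icc a b).norm_image_sub_le_of_norm_hasDerivWithin_le
    (fun x hx => (hderiv x hx).hasDerivWithinAt) hf'_lip ha hb
  rw [Real.norm_of_nonneg (sub_nonneg.2 hab)] at this
  convert this using 1
  · rw [sub_self, zero_smul, sub_zero, sub_right_comm]
  · ring

theorem norm_image_add_sub_smul_sub_le {f f' f'' : ℝ → E} {x d C : ℝ} (hd : 0 ≤ d)
    (hf : ∀ y, x ≤ y → HasDerivAt f (f' y) y) (hf' : ∀ y, x ≤ y → HasDerivAt f' (f'' y) y)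
    (hC : ∀ y, x ≤ y → ‖f'' y‖ ≤ C) :
    ‖f (x + d) - f x - d • (f (x + 1) - f x)‖ ≤ (d ^ 2 + d) * C := by
  have taylor : ∀ h, 0 ≤ h → ‖f (x + h) - f x - h • f' x‖ ≤ C * h ^ 2 := fun h hh => by
    simpa using norm_image_sub_sub_smul_deriv_le (by linarith : x ≤ x + h)
      (fun y hy => hf y hy.1) (fun y hy => hf' y hy.1) (fun y hy => hC y hy.1)
  have hd' := taylor d hd
  have h1 := taylor 1 zero_le_one
  rw [one_smul, one_pow, mul_one] at h1
  calc ‖f (x + d) - f x - d • (f (x + 1) - f x)‖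
      = ‖(f (x + d) - f x - d • f' x) - d • (f (x + 1) - f x - f' x)‖ := by
        congr 1; module
    _ ≤ C * d ^ 2 + d * C := by
        refine (norm_sub_le _ _).trans (add_le_add hd' ?_)
        rw [norm_smul, Real.norm_of_nonneg hd]
        exact mul_le_mul_of_nonneg_left h1 hd
    _ = (d ^ 2 + d) * C := by ring

variable [CompleteSpace E]

theorem norm_tsum_add_sub_tsum_add_smul_le {g g' g'' : ℝ → E} {c d : ℝ} {B : ℕ → ℝ}
    (hd : 0 ≤ d) (hg : ∀ x, c ≤ x → HasDerivAt g (g' x) x)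
    (hg' : ∀ x, c ≤ x → HasDerivAt g' (g'' x) x) (hB : ∀ (m : ℕ) x, c + m ≤ x → ‖g'' x‖ ≤ B m)
    (hBs : Summable B) (hgs : Summable fun m : ℕ => g (c + m)) :
    ‖∑' m : ℕ, g (c + d + m) - ∑' m : ℕ, g (c + m) + d • g c‖ ≤ (d ^ 2 + d) * ∑' m, B m := by
  set e : ℕ → E := fun m => g (c + d + m) - g (c + m) - d • (g (c + ↑(m + 1)) - g (c + m))
  have he : ∀ m, ‖e m‖ ≤ (d ^ 2 + d) * B m := fun m => by
    have hm : c ≤ c + m := le_add_of_nonneg_right m.cast_nonneg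
    simpa [e, add_right_comm c d, add_assoc] using norm_image_add_sub_smul_sub_le hd
      (fun y hy => hg y (hm.trans hy)) (fun y hy => hg' y (hm.trans hy)) (hB m)
  have hes : Summable e := (hBs.mul_left _).of_norm_bounded he
  have hgs₁ : Summable fun m : ℕ => g (c + ↑(m + 1)) := (summable_nat_add_iff 1).2 hgs
  have htelescope : ∑' m : ℕ, (g (c + ↑(m + 1)) - g (c + m)) = -g c := by
    rw [hgs₁.tsum_sub hgs, hgs.tsum_eq_zero_add]
    simp
  have hsplit : ∑' m : ℕ, g (c + d + m) = ∑' m : ℕ, g (c + m) + d • -g c + ∑' m, e m := by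
    rw [← htelescope, ← (hgs₁.sub hgs).tsum_const_smul d,
      ← hgs.tsum_add ((hgs₁.sub hgs).const_smul d),
      ← Summable.tsum_add (hgs.add ((hgs₁.sub hgs).const_smul d)) hes]
    congr 1 with m
    simp [e]
  calc ‖∑' m : ℕ, g (c + d + m) - ∑' m : ℕ, g (c + m) + d • g c‖ = ‖∑' m, e m‖ := by
        rw [hsplit, smul_neg]; congr 1; abel
    _ ≤ ∑' m, (d ^ 2 + d) * B m := tsum_of_norm_bounded (hBs.mul_left _).hasSum he
    _ = (d ^ 2 + d) * ∑' m, B m := tsum_mul_left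

end Taylor

theorem Complex.re_lt_one_of_norm_le_one {z : ℂ} (hz : ‖z‖ ≤ 1) (hz1 : z ≠ 1) : z.re < 1 := by
  by_contra! h
  have hre : z.re = 1 := le_antisymm ((re_le_norm z).trans hz) h
  have hnorm : ‖z‖ = 1 := le_antisymm hz (hre ▸ re_le_norm z)
  have him : z.im = 0 := abs_re_eq_norm.1 (by rw [hre, hnorm, abs_one])
  exact hz1 (Complex.ext (by simp [hre]) (by simp [him]))

theorem tendsto_rpow_const_nhdsWithin_one (s : Set ℝ) (c : ℝ) :
    Tendsto (fun q : ℝ => q ^ c) (𝓝[s] 1) (𝓝 1) := by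
  simpa using ((Real.continuousAt_rpow_const 1 c (Or.inl one_ne_zero)).tendsto).mono_left
    nhdsWithin_le_nhds

theorem tendsto_log_sq_div_one_sub :
    Tendsto (fun q : ℝ => Real.log q ^ 2 / (1 - q)) (𝓝[≠] 1) (𝓝 0) := by
  have hslope : Tendsto (slope Real.log 1) (𝓝[≠] 1) (𝓝 1) := by
    simpa using hasDerivAt_iff_tendsto_slope.1 (Real.hasDerivAt_log one_ne_zero)
  have hlog : Tendsto Real.log (𝓝[≠] 1) (𝓝 0) := by
    simpa using (Real.continuousAt_log one_ne_zero).tendsto.mono_left nhdsWithin_le_nhds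
  have h := (hlog.mul hslope).neg
  rw [zero_mul, neg_zero] at h
  refine h.congr' ?_
  filter_upwards [self_mem_nhdsWithin] with q hq
  have hq' : q - 1 ≠ 0 := sub_ne_zero.2 hq
  rw [slope_def_field, Real.log_one, sub_zero, ← neg_sub q 1]
  field_simp

noncomputable def qLogFactor (z : ℂ) (q x : ℝ) : ℂ := Complex.log (1 - ((q ^ x : ℝ) : ℂ) * z)

section qLogFactor

variable {z : ℂ} {q : ℝ}

theorem hasDerivAt_qLogFactor (hq : 0 < q) {x : ℝ}
    (hx : 1 - ((q ^ x : ℝ) : ℂ) * z ∈ slitPlane) :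
    HasDerivAt (qLogFactor z q)
      (-(((q ^ x * Real.log q : ℝ) : ℂ) * z) / (1 - ((q ^ x : ℝ) : ℂ) * z)) x :=
  (((Real.hasStrictDerivAt_const_rpow hq x).hasDerivAt.ofReal_comp.mul_const z).const_sub
    1).clog_real hx

theorem hasDerivAt_qLogFactor_deriv (hq : 0 < q) {x : ℝ} (hx : 1 - ((q ^ x : ℝ) : ℂ) * z ≠ 0) :
    HasDerivAt (fun x => -(((q ^ x * Real.log q : ℝ) : ℂ) * z) / (1 - ((q ^ x : ℝ) : ℂ) * z))
      (-(((q ^ x * Real.log q ^ 2 : ℝ) : ℂ) * z) / (1 - ((q ^ x : ℝ) : ℂ) * z) ^ 2) x := by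
  have hpow := (Real.hasStrictDerivAt_const_rpow hq x).hasDerivAt
  have hnum := ((hpow.mul_const (Real.log q)).ofReal_comp.mul_const z).neg
  have hden := (hpow.ofReal_comp.mul_const z).const_sub 1
  refine (hnum.div hden hx).congr_deriv ?_
  simp only [Pi.neg_apply]
  push_cast
  ring

theorem norm_qLogFactor_deriv2_le {δ : ℝ} (hq : 0 < q) (hz : ‖z‖ ≤ 1) (hδ : 0 < δ) {x : ℝ}
    (hx : δ ≤ ‖1 - ((q ^ x : ℝ) : ℂ) * z‖) :
    ‖-(((q ^ x * Real.log q ^ 2 : ℝ) : ℂ) * z) / (1 - ((q ^ x : ℝ) : ℂ) * z) ^ 2‖ ≤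
      Real.log q ^ 2 * q ^ x / δ ^ 2 := by
  have hqx : 0 ≤ q ^ x * Real.log q ^ 2 := by positivity
  rw [norm_div, norm_neg, norm_mul, norm_pow, norm_real, Real.norm_of_nonneg hqx]
  have hnum : q ^ x * Real.log q ^ 2 * ‖z‖ ≤ Real.log q ^ 2 * q ^ x := by
    rw [mul_comm (q ^ x)]
    exact mul_le_of_le_one_right (by positivity) hz
  gcongr

theorem summable_qLogFactor (hq0 : 0 < q) (hq1 : q < 1) (c : ℝ) :
    Summable fun m : ℕ => qLogFactor z q (c + m) := by
  have hgeom : Summable fun m : ℕ => q ^ (c + m) := by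
    simp_rw [Real.rpow_add hq0, Real.rpow_natCast]
    exact (summable_geometric_of_lt_one hq0.le hq1).mul_left _
  simpa [qLogFactor, sub_eq_add_neg] using
    Complex.summable_log_one_add_of_summable ((summable_ofReal.2 hgeom).mul_right z).neg

theorem norm_tsum_qLogFactor_add_sub_le {c d δ : ℝ} (hz : ‖z‖ ≤ 1) (hq0 : 0 < q) (hq1 : q < 1)
    (hδ : 0 < δ) (hre : ∀ x, c ≤ x → δ ≤ (1 - ((q ^ x : ℝ) : ℂ) * z).re) (hd : 0 ≤ d) :
    ‖∑' m : ℕ, qLogFactor z q (c + d + m) - ∑' m : ℕ, qLogFactor z q (c + m) +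
        d • qLogFactor z q c‖ ≤
      (d ^ 2 + d) * q ^ c / δ ^ 2 * (Real.log q ^ 2 / (1 - q)) := by
  have hnorm : ∀ x, c ≤ x → δ ≤ ‖1 - ((q ^ x : ℝ) : ℂ) * z‖ := fun x hx =>
    (hre x hx).trans (re_le_norm _)
  have hslit : ∀ x, c ≤ x → 1 - ((q ^ x : ℝ) : ℂ) * z ∈ slitPlane := fun x hx =>
    mem_slitPlane_iff.2 (.inl (hδ.trans_le (hre x hx)))
  have hB : ∀ (m : ℕ) x, c + m ≤ x →
      ‖-(((q ^ x * Real.log q ^ 2 : ℝ) : ℂ) * z) / (1 - ((q ^ x : ℝ) : ℂ) * z) ^ 2‖ ≤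
        Real.log q ^ 2 * q ^ c / δ ^ 2 * q ^ m := fun m x hx => by
    have hcx : c ≤ x := by linarith [m.cast_nonneg (α := ℝ)]
    refine (norm_qLogFactor_deriv2_le hq0 hz hδ (hnorm x hcx)).trans ?_
    rw [mul_div_right_comm, mul_div_right_comm _ (q ^ c), mul_assoc, ← Real.rpow_natCast q m,
      ← Real.rpow_add hq0]
    gcongr _ * ?_
    exact Real.rpow_le_rpow_of_exponent_ge hq0 hq1.le hx
  have hgeom := (hasSum_geometric_of_lt_one hq0.le hq1).mul_left (Real.log q ^ 2 * q ^ c / δ ^ 2)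
  refine (norm_tsum_add_sub_tsum_add_smul_le hd
    (fun x hx => hasDerivAt_qLogFactor hq0 (hslit x hx))
    (fun x hx => hasDerivAt_qLogFactor_deriv hq0 (slitPlane_ne_zero (hslit x hx)))
    hB hgeom.summable (summable_qLogFactor hq0 hq1 c)).trans_eq ?_
  rw [hgeom.tsum_eq]
  ring

end qLogFactor

section Limit

variable {z : ℂ}

theorem eventually_le_re_one_sub_rpow_mul (hz : ‖z‖ ≤ 1) (hz1 : z ≠ 1) (c : ℝ) :
    ∀ᶠ q in 𝓝[Ioo 0 1] 1, ∀ x, c ≤ x → (1 - z.re) / 2 ≤ (1 - ((q ^ x : ℝ) : ℂ) * z).re := by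
  have hre := Complex.re_lt_one_of_norm_le_one hz hz1
  have hre' : -1 ≤ z.re := by linarith [neg_abs_le z.re, abs_re_le_norm z]
  have hlim : Tendsto (fun q : ℝ => q ^ c * z.re) (𝓝[Ioo 0 1] 1) (𝓝 z.re) := by
    simpa using (tendsto_rpow_const_nhdsWithin_one _ c).mul_const z.re
  have hmid : z.re < (1 + z.re) / 2 := by linarith
  filter_upwards [self_mem_nhdsWithin, hlim.eventually (gt_mem_nhds hmid)]
    with q ⟨hq0, hq1⟩ hqc x hx
  have hqx : q ^ x ≤ q ^ c := Real.rpow_le_rpow_of_exponent_ge hq0 hq1.le hx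
  have hqx0 : 0 < q ^ x := Real.rpow_pos_of_pos hq0 x
  simp only [sub_re, one_re, re_ofReal_mul]
  rcases le_total 0 z.re with h | h <;> nlinarith

theorem tendsto_tsum_qLogFactor_add_sub (hz : ‖z‖ ≤ 1) (hz1 : z ≠ 1) (c : ℝ) {d : ℝ}
    (hd : 0 ≤ d) :
    Tendsto (fun q => ∑' m : ℕ, qLogFactor z q (c + d + m) - ∑' m : ℕ, qLogFactor z q (c + m))
      (𝓝[Ioo 0 1] 1) (𝓝 (-(d • Complex.log (1 - z)))) := by
  have hre := Complex.re_lt_one_of_norm_le_one hz hz1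
  have hδ : 0 < (1 - z.re) / 2 := half_pos (sub_pos.2 hre)
  have hslit : 1 - z ∈ slitPlane := mem_slitPlane_iff.2 (.inl (by simpa using hre))
  have hfactor : Tendsto (fun q => qLogFactor z q c) (𝓝[Ioo 0 1] 1) (𝓝 (Complex.log (1 - z))) := by
    refine Tendsto.clog ?_ hslit
    simpa using ((continuous_ofReal.tendsto 1).comp
      (tendsto_rpow_const_nhdsWithin_one _ c)).mul_const z |>.const_sub 1
  have hbound : Tendsto (fun q : ℝ => (d ^ 2 + d) * q ^ c / ((1 - z.re) / 2) ^ 2 *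
      (Real.log q ^ 2 / (1 - q))) (𝓝[Ioo 0 1] 1) (𝓝 0) := by
    simpa using (((tendsto_rpow_const_nhdsWithin_one _ c).const_mul (d ^ 2 + d)).div_const
      (((1 - z.re) / 2) ^ 2)).mul (tendsto_log_sq_div_one_sub.mono_left
        (nhdsWithin_mono 1 fun q (hq : q ∈ Ioo (0 : ℝ) 1) => hq.2.ne))
  have herror := squeeze_zero_norm' (by
    filter_upwards [self_mem_nhdsWithin, eventually_le_re_one_sub_rpow_mul hz hz1 c]
      with q ⟨hq0, hq1⟩ hre
    exact norm_tsum_qLogFactor_add_sub_le hz hq0 hq1 hδ hre hd) hbound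
  simpa using herror.sub (hfactor.const_smul d)

theorem tendsto_tsum_qLogFactor_sub (hz : ‖z‖ ≤ 1) (hz1 : z ≠ 1) (a b : ℝ) :
    Tendsto (fun q => ∑' m : ℕ, qLogFactor z q (a + m) - ∑' m : ℕ, qLogFactor z q (b + m))
      (𝓝[Ioo 0 1] 1) (𝓝 ((b - a) • Complex.log (1 - z))) := by
  have ha := tendsto_tsum_qLogFactor_add_sub hz hz1 (min a b) (sub_nonneg.2 (min_le_left a b))
  have hb := tendsto_tsum_qLogFactor_add_sub hz hz1 (min a b) (sub_nonneg.2 (min_le_right a b))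
  simp only [add_sub_cancel] at ha hb
  convert ha.sub hb using 1
  · ext q; abel
  · congr 1; module

theorem eventually_tprod_eq_cexp_tsum_qLogFactor (hz : ‖z‖ ≤ 1) (hz1 : z ≠ 1) (k : ℝ) :
    ∀ᶠ q : ℝ in 𝓝[Ioo 0 1] 1, ∏' m : ℕ, (1 - (q : ℂ) ^ (k : ℂ) * z * (q : ℂ) ^ (m + 1)) =
      exp (∑' m : ℕ, qLogFactor z q (k + 1 + m)) := by
  have hδ : 0 < (1 - z.re) / 2 := half_pos (sub_pos.2 (Complex.re_lt_one_of_norm_le_one hz hz1))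
  filter_upwards [self_mem_nhdsWithin, eventually_le_re_one_sub_rpow_mul hz hz1 (k + 1)]
    with q ⟨hq0, hq1⟩ hre
  have hfactor : ∀ m : ℕ, 1 - (q : ℂ) ^ (k : ℂ) * z * (q : ℂ) ^ (m + 1) =
      1 - ((q ^ (k + 1 + m) : ℝ) : ℂ) * z := fun m => by
    rw [Real.rpow_add hq0, Real.rpow_add hq0, Real.rpow_one, Real.rpow_natCast,
      ← ofReal_cpow hq0.le]
    push_cast
    ring
  have hne : ∀ m : ℕ, 1 - ((q ^ (k + 1 + m) : ℝ) : ℂ) * z ≠ 0 := fun m h => by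
    have := hre (k + 1 + m) (by simp)
    rw [h, zero_re] at this
    linarith
  rw [tprod_congr hfactor, ← cexp_tsum_eq_tprod hne (summable_qLogFactor hq0 hq1 (k + 1))]
  rfl

end Limit

/-- Koornwinder's limit: for `z` in the closed unit disc, `z ≠ 1`,
`lim_{q↑1} (q^{k₁}z; q)_∞ / (q^{k₂}z; q)_∞ = (1 − z)^{k₂ − k₁}` (principal branch), where
`(a;q)_∞ = Π_{m=1}^∞ (1 − a qᵐ)`. -/
theorem q_pochhammer_ratio_limit (k₁ k₂ : ℝ) (z : ℂ) (hz1 : ‖z‖ ≤ 1) (hz2 : z ≠ 1) :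
    Tendsto (fun q : ℝ =>
        (∏' m : ℕ, (1 - (q : ℂ) ^ (k₁ : ℂ) * z * (q : ℂ) ^ (m + 1))) /
        (∏' m : ℕ, (1 - (q : ℂ) ^ (k₂ : ℂ) * z * (q : ℂ) ^ (m + 1))))
      (nhdsWithin 1 (Set.Ioo 0 1))
      (nhds ((1 - z) ^ ((k₂ : ℂ) - (k₁ : ℂ)))) := by
  have hlog := tendsto_tsum_qLogFactor_sub hz1 hz2 (k₁ + 1) (k₂ + 1)
  have hpow : exp (((k₂ + 1) - (k₁ + 1)) • Complex.log (1 - z)) = (1 - z) ^ ((k₂ : ℂ) - k₁) := by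
    rw [cpow_def_of_ne_zero (sub_ne_zero.2 hz2.symm), real_smul]
    push_cast
    congr 1
    ring
  rw [← hpow]
  refine ((continuous_exp.tendsto _).comp hlog).congr' ?_
  filter_upwards [eventually_tprod_eq_cexp_tsum_qLogFactor hz1 hz2 k₁,
    eventually_tprod_eq_cexp_tsum_qLogFactor hz1 hz2 k₂] with q h₁ h₂
  rw [Function.comp_apply, exp_sub, h₁, h₂]
end
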